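/- Let V_1,…,V_d be finite-dimensional complex vector spaces, T ∈ V_1⊗⋯⊗V_d, and I ⊆ {1,…,d}. Let F_T : ⨂_{j∉I} V_j* → ⨂_{i∈I} V_i denote the flattening map of T associated to I. Then for any tuple (X_i)_{i∈I} of endomorphisms X_i ∈ End(V_i), the element Σ_{i∈I} (Id⊗⋯⊗X_i⊗⋯⊗Id)(T) of V_1⊗⋯⊗V_d is zero if and only if for every S in the image of F_T one has Σ_{i∈I} (Id⊗⋯⊗X_i⊗⋯⊗Id)(S) = 0 in ⨂_{i∈I} V_i. (In the notation of annihilators: ann(T) ∩ (⊕_{i∈I} End(V_i)) = ⋂_{S ∈ Im F_T} ann(S).) -/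

import Mathlib

/-!
The Leibniz action of the `X_i`, `i ∈ I`, commutes with contraction against functionals on the
factors outside `I`, so `X.F_T(c) = F_{X.T}(c)`. Hence `X.T = 0` kills the whole image of `F_T`.
Conversely, contracting with the coordinate functional at an outside multi-index `κ` picks out the
slice of `X.T` at `κ`, and these slices make up all of `X.T`.
-/

open scoped BigOperators

/-- Gluing of partial index assignments on `I` and on its complement. -/
def glue {d : ℕ} {n : Fin d → ℕ} (I : Finset (Fin d))
    (βI : ∀ i : {v : Fin d // v ∈ I}, Fin (n i.1))
    (κ : ∀ j : {v : Fin d // v ∉ I}, Fin (n j.1)) : ∀ v : Fin d, Fin (n v) :=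
  fun v => if h : v ∈ I then βI ⟨v, h⟩ else κ ⟨v, h⟩

/-- The flattening map of `T` associated to `I ⊆ {1,…,d}`, in coordinates: it takes a
functional `c` on `⨂_{j∉I} V_j*` (given by its coordinates) to the tensor
`F_T(c) ∈ ⨂_{i∈I} V_i`. -/
noncomputable def flat {d : ℕ} {n : Fin d → ℕ} (I : Finset (Fin d))
    (T : (∀ v : Fin d, Fin (n v)) → ℂ)
    (c : (∀ j : {v : Fin d // v ∉ I}, Fin (n j.1)) → ℂ) :
    (∀ i : {v : Fin d // v ∈ I}, Fin (n i.1)) → ℂ :=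
  fun βI => ∑ κ : (∀ j : {v : Fin d // v ∉ I}, Fin (n j.1)), c κ * T (glue I βI κ)

/-- `Σ_j (Id⊗⋯⊗Y_j⊗⋯⊗Id)(S)` for a tensor `S` in coordinates, `Y_j` given by its matrix. -/
noncomputable def leibnizAct {J : Type*} [Fintype J] [DecidableEq J] {m : J → ℕ}
    (Y : ∀ j, Fin (m j) → Fin (m j) → ℂ) (S : (∀ j, Fin (m j)) → ℂ) :
    (∀ j, Fin (m j)) → ℂ :=
  fun β => ∑ j, ∑ γ : Fin (m j), Y j (β j) γ * S (Function.update β j γ)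

/-- The action of a tuple `(X_i)_{i∈I}` on `V_1⊗⋯⊗V_d`, the factors outside `I` acted on by `0`. -/
noncomputable def leibnizActOn {d : ℕ} {n : Fin d → ℕ} (I : Finset (Fin d))
    (X : ∀ i : {v : Fin d // v ∈ I}, Fin (n i.1) → Fin (n i.1) → ℂ)
    (T : (∀ v : Fin d, Fin (n v)) → ℂ) : (∀ v : Fin d, Fin (n v)) → ℂ :=
  fun β => ∑ i : {v : Fin d // v ∈ I}, ∑ γ : Fin (n i.1),
    X i (β i.1) γ * T (Function.update β i.1 γ)

section Glue

variable {d : ℕ} {n : Fin d → ℕ} (I : Finset (Fin d))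

lemma glue_apply_mem (βI : ∀ i : {v : Fin d // v ∈ I}, Fin (n i.1))
    (κ : ∀ j : {v : Fin d // v ∉ I}, Fin (n j.1)) (i : {v : Fin d // v ∈ I}) :
    glue I βI κ i.1 = βI i := by
  simp [glue, i.2]

lemma glue_update (βI : ∀ i : {v : Fin d // v ∈ I}, Fin (n i.1))
    (κ : ∀ j : {v : Fin d // v ∉ I}, Fin (n j.1)) (i : {v : Fin d // v ∈ I}) (γ : Fin (n i.1)) :
    glue I (Function.update βI i γ) κ = Function.update (glue I βI κ) i.1 γ := by
  funext v
  by_cases hv : v = i.1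
  · subst hv
    simp [glue, i.2]
  · by_cases h : v ∈ I
    · have hne : (⟨v, h⟩ : {v : Fin d // v ∈ I}) ≠ i := fun he => hv (congrArg Subtype.val he)
      simp [glue, h, Function.update_of_ne hne, Function.update_of_ne hv]
    · simp [glue, h, Function.update_of_ne hv]

lemma glue_restrict (β : ∀ v : Fin d, Fin (n v)) :
    glue I (fun i : {v : Fin d // v ∈ I} => β i.1) (fun j : {v : Fin d // v ∉ I} => β j.1) = β := by
  funext v
  by_cases h : v ∈ I <;> simp [glue, h]

end Glue

section Flat

variable {d : ℕ} {n : Fin d → ℕ} (I : Finset (Fin d)) (T : (∀ v : Fin d, Fin (n v)) → ℂ)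

lemma flat_pi_single (κ : ∀ j : {v : Fin d // v ∉ I}, Fin (n j.1))
    (βI : ∀ i : {v : Fin d // v ∈ I}, Fin (n i.1)) :
    flat I T (Pi.single κ 1) βI = T (glue I βI κ) := by
  simp [flat, Pi.single_apply]

lemma leibnizAct_flat (X : ∀ i : {v : Fin d // v ∈ I}, Fin (n i.1) → Fin (n i.1) → ℂ)
    (c : (∀ j : {v : Fin d // v ∉ I}, Fin (n j.1)) → ℂ) :
    leibnizAct X (flat I T c) = flat I (leibnizActOn I X T) c := by
  funext βI
  simp only [leibnizAct, leibnizActOn, flat, Finset.mul_sum, glue_update, glue_apply_mem,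
    mul_left_comm (c _)]
  rw [Finset.sum_comm]
  exact Finset.sum_congr rfl fun i _ => Finset.sum_comm

end Flat

/-- Lemma: for a tuple `(X_i)_{i∈I}` of endomorphisms acting on the factors in `I`,
`Σ_{i∈I} (Id⊗⋯⊗X_i⊗⋯⊗Id)(T) = 0` if and only if
`Σ_{i∈I} (Id⊗⋯⊗X_i⊗⋯⊗Id)(S) = 0` for every `S` in the image of the flattening map
`F_T : ⨂_{j∉I} V_j* → ⨂_{i∈I} V_i`. -/
theorem ann_inter_partial_eq_iInf_ann_flattening {d : ℕ} (n : Fin d → ℕ)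
    (T : (∀ v : Fin d, Fin (n v)) → ℂ) (I : Finset (Fin d))
    (X : ∀ i : {v : Fin d // v ∈ I}, Fin (n i.1) → Fin (n i.1) → ℂ) :
    (∀ β : ∀ v : Fin d, Fin (n v),
      (∑ i : {v : Fin d // v ∈ I}, ∑ γ : Fin (n i.1),
        X i (β i.1) γ * T (Function.update β i.1 γ)) = 0)
    ↔ (∀ c : (∀ j : {v : Fin d // v ∉ I}, Fin (n j.1)) → ℂ,
        ∀ βI : ∀ i : {v : Fin d // v ∈ I}, Fin (n i.1),
          (∑ i : {v : Fin d // v ∈ I}, ∑ γ : Fin (n i.1),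
            X i (βI i) γ * flat I T c (Function.update βI i γ)) = 0) := by
  change (∀ β, leibnizActOn I X T β = 0) ↔ ∀ c βI, leibnizAct X (flat I T c) βI = 0
  simp only [leibnizAct_flat]
  constructor
  · intro h c βI
    simp [flat, h]
  · intro h β
    simpa only [flat_pi_single, glue_restrict] using
      h (Pi.single (fun j => β j.1) 1) (fun i => β i.1)
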